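/- arXiv:2502.02898 — 2 statements merged into one kernel-verified Lean document; each statement's English description precedes it below -/
import Mathlib

section
/- Let f be in the class BT_B with Taylor coefficients a_n, and let Γ_1 = −a_2/2, Γ_2 = −(1/2)(a_3 − (3/2)a_2²), Γ_3 = −(1/2)(a_4 − 4·a_2·a_3 + (10/3)a_2³) be the logarithmic coefficients of the inverse function of f. Then the second Hankel determinant of the logarithmic inverse coefficients satisfies |Γ_1·Γ_3 − Γ_2²| ≤ 1/144. Equivalently, |13·a_2⁴ − 12·a_2²·a_3 − 12·a_3² + 12·a_2·a_4|/48 ≤ 1/144. -/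
open Complex Metric

/-- Principal branch of the square root: `w^(1/2) = exp((1/2) * Log w)`. -/
noncomputable def psqrt (w : ℂ) : ℂ := Complex.exp ((1/2 : ℂ) * Complex.log w)

/-- The `n`-th Taylor coefficient of `f` at `0`, i.e. `f^(n)(0)/n!`. -/
noncomputable def tCoeff (f : ℂ → ℂ) (n : ℕ) : ℂ := iteratedDeriv n f 0 / n.factorial

/-- The class `BT_B` of bounded turning functions associated with the bean-shaped domain:
`f` is analytic on the unit disk, `f 0 = 0`, `f' 0 = 1`, `f` injective on the disk,
and `f'(z) = (1 + tanh (ω z))^(1/2)` for a Schwarz function `ω`. -/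
def IsBTB (f : ℂ → ℂ) : Prop :=
  AnalyticOnNhd ℂ f (ball 0 1) ∧ f 0 = 0 ∧ deriv f 0 = 1 ∧
  Set.InjOn f (ball 0 1) ∧
  ∃ ω : ℂ → ℂ, AnalyticOnNhd ℂ ω (ball 0 1) ∧ ω 0 = 0 ∧
    (∀ z ∈ ball (0:ℂ) 1, ‖ω z‖ < 1) ∧
    (∀ z ∈ ball (0:ℂ) 1, deriv f z = psqrt (1 + Complex.tanh (ω z)))

/-!
Write `ω(z) = z D(z)`, where `D` is a holomorphic map of the unit disc into the closed unit disc,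
with Taylor coefficients `c₀, c₁, c₂` at the origin. Squaring `f' = (1 + tanh ω)^(1/2)` and using
`(tanh ω)' = ω' (1 - tanh² ω)` expresses `a₂, a₃, a₄` through `c₀, c₁, c₂`, and then
`48 (Γ₁Γ₃ - Γ₂²) = 3/8 c₀c₂ - 7/48 c₀²c₁ - 1/3 c₁² - 13/768 c₀⁴`.
Composing `D` with the disc automorphism moving `D 0` to `0` gives the Schwarz–Pick inequality
`|c₁| ≤ 1 - |c₀|²`, and applying it once more to the quotient of that composition by `z` gives
Carlson's inequality `|c₂| ≤ 1 - |c₀|² - |c₁|² / (1 + |c₀|)`. With these bounds the triangle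
inequality leaves an elementary inequality in `|c₀|, |c₁|` whose maximum `1/3` is attained at
`c₀ = 0, |c₁| = 1`.
-/

open Set Filter Topology Finset ComplexConjugate

@[simp]
lemma tCoeff_zero (f : ℂ → ℂ) : tCoeff f 0 = f 0 := by
  simp [tCoeff]

lemma tCoeff_one (f : ℂ → ℂ) : tCoeff f 1 = deriv f 0 := by
  simp [tCoeff]

lemma Filter.EventuallyEq.tCoeff_eq {f g : ℂ → ℂ} (h : f =ᶠ[𝓝 0] g) (n : ℕ) :
    tCoeff f n = tCoeff g n := by
  rw [tCoeff, tCoeff, h.iteratedDeriv_eq]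

lemma tCoeff_deriv (f : ℂ → ℂ) (n : ℕ) : tCoeff (deriv f) n = (n + 1) * tCoeff f (n + 1) := by
  rw [tCoeff, tCoeff, iteratedDeriv_succ', Nat.factorial_succ]
  push_cast
  field_simp

lemma tCoeff_const (c : ℂ) {n : ℕ} (hn : n ≠ 0) : tCoeff (fun _ => c) n = 0 := by
  simp [tCoeff, iteratedDeriv_const, hn]

lemma tCoeff_const_add (c : ℂ) (f : ℂ → ℂ) {n : ℕ} (hn : n ≠ 0) :
    tCoeff (fun z => c + f z) n = tCoeff f n := by
  rw [tCoeff, tCoeff, iteratedDeriv_const_add (Nat.pos_of_ne_zero hn)]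

lemma tCoeff_sub_const (f : ℂ → ℂ) (c : ℂ) {n : ℕ} (hn : n ≠ 0) :
    tCoeff (fun z => f z - c) n = tCoeff f n := by
  simpa only [neg_add_eq_sub] using tCoeff_const_add (-c) f hn

lemma tCoeff_const_mul (c : ℂ) (f : ℂ → ℂ) (n : ℕ) :
    tCoeff (fun z => c * f z) n = c * tCoeff f n := by
  rw [tCoeff, tCoeff, iteratedDeriv_const_mul_field, mul_div_assoc]

lemma tCoeff_const_sub (c : ℂ) (f : ℂ → ℂ) {n : ℕ} (hn : n ≠ 0) :
    tCoeff (fun z => c - f z) n = -tCoeff f n := by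
  simpa [sub_eq_add_neg] using tCoeff_const_add c (fun z => -1 * f z) hn |>.trans
    (tCoeff_const_mul (-1) f n)

lemma tCoeff_id (n : ℕ) : tCoeff (fun z => z) n = if n = 1 then 1 else 0 := by
  rw [tCoeff, iteratedDeriv_fun_id_zero]
  split_ifs with h <;> simp [h]

lemma tCoeff_mul {f g : ℂ → ℂ} (hf : AnalyticAt ℂ f 0) (hg : AnalyticAt ℂ g 0) (n : ℕ) :
    tCoeff (fun z => f z * g z) n = ∑ i ∈ range (n + 1), tCoeff f i * tCoeff g (n - i) := by
  rw [tCoeff, iteratedDeriv_fun_mul hf.contDiffAt hg.contDiffAt, sum_div]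
  refine sum_congr rfl fun i hi => ?_
  have hi : i ≤ n := Nat.lt_succ_iff.mp (mem_range.mp hi)
  have : (n.factorial : ℂ) ≠ 0 := Nat.cast_ne_zero.mpr n.factorial_ne_zero
  rw [tCoeff, tCoeff, Nat.cast_choose ℂ hi]
  field_simp

lemma AnalyticAt.dslope {f : ℂ → ℂ} {a : ℂ} (hf : AnalyticAt ℂ f a) :
    AnalyticAt ℂ (dslope f a) a :=
  let ⟨_, hp⟩ := hf
  ⟨_, hp.has_fpower_series_dslope_fslope⟩

lemma tCoeff_dslope {f : ℂ → ℂ} (hf : AnalyticAt ℂ f 0) (n : ℕ) :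
    tCoeff (dslope f 0) n = tCoeff f (n + 1) := by
  have hfac : f = fun z => f 0 + z * dslope f 0 z := by
    funext z
    have h := sub_smul_dslope f 0 z
    rw [sub_zero, smul_eq_mul] at h
    rw [h, add_sub_cancel]
  conv_rhs => rw [hfac, tCoeff_const_add _ _ n.succ_ne_zero,
    tCoeff_mul (f := fun z => z) analyticAt_id hf.dslope, sum_range_succ']
  simp [tCoeff_id]

lemma normSq_one_sub_conj_mul_sub_normSq_sub (a w : ℂ) :
    normSq (1 - conj a * w) - normSq (w - a) = (1 - normSq a) * (1 - normSq w) := by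
  simp only [normSq_apply, sub_re, sub_im, mul_re, mul_im, conj_re, conj_im, one_re, one_im]
  ring

lemma norm_sub_le_norm_one_sub_conj_mul {a w : ℂ} (ha : ‖a‖ ≤ 1) (hw : ‖w‖ ≤ 1) :
    ‖w - a‖ ≤ ‖1 - conj a * w‖ := by
  rw [norm_def, norm_def]
  refine Real.sqrt_le_sqrt (sub_nonneg.mp ?_)
  rw [normSq_one_sub_conj_mul_sub_normSq_sub, ← Complex.sq_norm, ← Complex.sq_norm]
  exact mul_nonneg (by nlinarith [norm_nonneg a]) (by nlinarith [norm_nonneg w])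

lemma one_sub_conj_mul_ne_zero {a w : ℂ} (ha : ‖a‖ < 1) (hw : ‖w‖ ≤ 1) :
    1 - conj a * w ≠ 0 := by
  refine sub_ne_zero.mpr fun h => ?_
  have : ‖conj a * w‖ < 1 := by
    rw [norm_mul, norm_conj]
    exact mul_lt_one_of_nonneg_of_lt_one_left (norm_nonneg a) ha hw
  simp [← h] at this

noncomputable def recenter (H : ℂ → ℂ) (z : ℂ) : ℂ := (H z - H 0) / (1 - conj (H 0) * H z)

@[simp]
lemma recenter_zero (H : ℂ → ℂ) : recenter H 0 = 0 := by
  simp [recenter]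

lemma tCoeff_recenter {H : ℂ → ℂ} (hH : AnalyticAt ℂ H 0) (ha : ‖H 0‖ < 1) :
    tCoeff (recenter H) 1 * (1 - ‖H 0‖ ^ 2 : ℝ) = tCoeff H 1 ∧
    tCoeff (recenter H) 2 * (1 - ‖H 0‖ ^ 2 : ℝ) =
      tCoeff H 2 + conj (H 0) * tCoeff H 1 * tCoeff (recenter H) 1 := by
  set a := H 0
  set K : ℂ → ℂ := fun z => 1 - conj a * H z
  have hK0 : K 0 = (1 - ‖a‖ ^ 2 : ℝ) := by simp [K, a, conj_mul']
  have hK0ne : K 0 ≠ 0 := one_sub_conj_mul_ne_zero ha ha.le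
  have hKa : AnalyticAt ℂ K 0 := analyticAt_const.sub (analyticAt_const.mul hH)
  have hGa : AnalyticAt ℂ (recenter H) 0 := (hH.sub analyticAt_const).div hKa hK0ne
  have hGK : (fun z => recenter H z * K z) =ᶠ[𝓝 0] fun z => H z - a := by
    filter_upwards [hKa.continuousAt.eventually_ne hK0ne] with z hz
    exact div_mul_cancel₀ _ hz
  have hKn : ∀ n ≠ 0, tCoeff K n = -(conj a * tCoeff H n) := fun n hn => by
    rw [tCoeff_const_sub _ _ hn, tCoeff_const_mul]
  have hcoeff : ∀ n ≠ 0, ∑ i ∈ range (n + 1), tCoeff (recenter H) i * tCoeff K (n - i) =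
      tCoeff H n := fun n hn => by
    rw [← tCoeff_mul hGa hKa, hGK.tCoeff_eq, tCoeff_sub_const _ _ hn]
  have h1 := hcoeff 1 one_ne_zero
  have h2 := hcoeff 2 two_ne_zero
  simp only [sum_range_succ, sum_range_zero, tCoeff_zero, recenter_zero,
    hKn 1 one_ne_zero] at h1 h2
  norm_num [hK0] at h1 h2
  push_cast
  exact ⟨by linear_combination h1, by linear_combination h2⟩

section SelfMapOfDisc

variable {H : ℂ → ℂ}

lemma tCoeff_eq_zero_of_norm_eq_one (hH : DifferentiableOn ℂ H (ball 0 1))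
    (hmaps : MapsTo H (ball 0 1) (closedBall 0 1)) (h1 : ‖H 0‖ = 1) {n : ℕ} (hn : n ≠ 0) :
    tCoeff H n = 0 := by
  have hmax : IsMaxOn (norm ∘ H) (ball 0 1) 0 := fun z hz => by
    simpa [h1] using hmaps hz
  have hconst : H =ᶠ[𝓝 0] fun _ => H 0 :=
    Filter.eventually_of_mem (ball_mem_nhds 0 one_pos) fun z hz =>
      eqOn_of_isPreconnected_of_isMaxOn_norm (convex_ball 0 1).isPreconnected isOpen_ball hH
        (mem_ball_self one_pos) hmax hz
  rw [hconst.tCoeff_eq, tCoeff_const _ hn]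

lemma differentiableOn_recenter (hH : DifferentiableOn ℂ H (ball 0 1))
    (hmaps : MapsTo H (ball 0 1) (closedBall 0 1)) (ha : ‖H 0‖ < 1) :
    DifferentiableOn ℂ (recenter H) (ball 0 1) :=
  (hH.sub_const _).div ((differentiableOn_const 1).sub ((differentiableOn_const _).mul hH))
    fun _ hz => one_sub_conj_mul_ne_zero ha (mem_closedBall_zero_iff.mp (hmaps hz))

lemma mapsTo_recenter (hmaps : MapsTo H (ball 0 1) (closedBall 0 1)) (ha : ‖H 0‖ < 1) :
    MapsTo (recenter H) (ball 0 1) (closedBall 0 1) := by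
  intro z hz
  have hw := mem_closedBall_zero_iff.mp (hmaps hz)
  rw [mem_closedBall_zero_iff, recenter, norm_div,
    div_le_one (norm_pos_iff.mpr (one_sub_conj_mul_ne_zero ha hw))]
  exact norm_sub_le_norm_one_sub_conj_mul ha.le hw

theorem norm_tCoeff_one_le (hH : DifferentiableOn ℂ H (ball 0 1))
    (hmaps : MapsTo H (ball 0 1) (closedBall 0 1)) : ‖tCoeff H 1‖ ≤ 1 - ‖H 0‖ ^ 2 := by
  have hH0 : ‖H 0‖ ≤ 1 := mem_closedBall_zero_iff.mp (hmaps (mem_ball_self one_pos))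
  rcases hH0.eq_or_lt with h1 | ha
  · simp [tCoeff_eq_zero_of_norm_eq_one hH hmaps h1 one_ne_zero, h1]
  have hG : ‖tCoeff (recenter H) 1‖ ≤ 1 := by
    rw [tCoeff_one]
    refine norm_deriv_le_one_of_mapsTo_ball (differentiableOn_recenter hH hmaps ha) ?_ one_pos
    simpa using mapsTo_recenter hmaps ha
  have hq : 0 ≤ 1 - ‖H 0‖ ^ 2 := by nlinarith [norm_nonneg (H 0)]
  rw [← (tCoeff_recenter (hH.analyticAt (ball_mem_nhds 0 one_pos)) ha).1, norm_mul,
    norm_real, Real.norm_of_nonneg hq]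
  exact mul_le_of_le_one_left hq hG

theorem norm_tCoeff_two_le (hH : DifferentiableOn ℂ H (ball 0 1))
    (hmaps : MapsTo H (ball 0 1) (closedBall 0 1)) :
    ‖tCoeff H 2‖ ≤ 1 - ‖H 0‖ ^ 2 - ‖tCoeff H 1‖ ^ 2 / (1 + ‖H 0‖) := by
  have hH0 : ‖H 0‖ ≤ 1 := mem_closedBall_zero_iff.mp (hmaps (mem_ball_self one_pos))
  rcases hH0.eq_or_lt with h1 | ha
  · simp [tCoeff_eq_zero_of_norm_eq_one hH hmaps h1, h1]
  have hGd := differentiableOn_recenter hH hmaps ha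
  have hGa : AnalyticAt ℂ (recenter H) 0 := hGd.analyticAt (ball_mem_nhds 0 one_pos)
  have hSP : ‖tCoeff (recenter H) 2‖ ≤ 1 - ‖tCoeff (recenter H) 1‖ ^ 2 := by
    have hmaps' : MapsTo (dslope (recenter H) 0) (ball 0 1) (closedBall 0 1) := fun z hz => by
      simpa using norm_dslope_le_div_of_mapsTo_ball hGd
        (by simpa using mapsTo_recenter hmaps ha) hz
    have := norm_tCoeff_one_le ((differentiableOn_dslope (ball_mem_nhds 0 one_pos)).mpr hGd) hmaps'
    rwa [← tCoeff_zero (dslope _ 0), tCoeff_dslope hGa, tCoeff_dslope hGa] at this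
  obtain ⟨h1, h2⟩ := tCoeff_recenter (hH.analyticAt (ball_mem_nhds 0 one_pos)) ha
  set x := ‖H 0‖
  set q : ℝ := 1 - x ^ 2
  have hq : 0 < q := by nlinarith [norm_nonneg (H 0)]
  have hG1 : ‖tCoeff (recenter H) 1‖ = ‖tCoeff H 1‖ / q := by
    rw [← h1, norm_mul, norm_real, Real.norm_of_nonneg hq.le, mul_div_cancel_right₀ _ hq.ne']
  have hc2 : ‖tCoeff H 2‖ ≤ ‖tCoeff (recenter H) 2‖ * q + x * ‖tCoeff H 1‖ ^ 2 / q := by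
    calc ‖tCoeff H 2‖
        = ‖tCoeff (recenter H) 2 * q - conj (H 0) * tCoeff H 1 * tCoeff (recenter H) 1‖ := by
          rw [h2, add_sub_cancel_right]
      _ ≤ _ := norm_sub_le _ _
      _ = _ := by
          rw [norm_mul, norm_mul, norm_mul, norm_conj, norm_real, Real.norm_of_nonneg hq.le, hG1]
          ring
  have hx : 0 < 1 - x := by linarith
  calc ‖tCoeff H 2‖
      ≤ (1 - (‖tCoeff H 1‖ / q) ^ 2) * q + x * ‖tCoeff H 1‖ ^ 2 / q := by
        rw [← hG1]
        nlinarith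
    _ = q - ‖tCoeff H 1‖ ^ 2 / (1 + x) := by
        have hx' : 0 < 1 + x := by positivity
        rw [show q = (1 - x) * (1 + x) by ring]
        field_simp
        ring

end SelfMapOfDisc

lemma tCoeff_succ_of_deriv_eventuallyEq {f g : ℂ → ℂ} (h : deriv f =ᶠ[𝓝 0] g) (n : ℕ) :
    tCoeff f (n + 1) = tCoeff g n / (n + 1) := by
  rw [← h.tCoeff_eq, tCoeff_deriv, mul_div_cancel_left₀ _ (Nat.cast_add_one_ne_zero n)]

lemma Complex.hasDerivAt_tanh {w : ℂ} (hw : cosh w ≠ 0) : HasDerivAt tanh (1 - tanh w ^ 2) w := by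
  rw [show tanh = sinh / cosh from funext tanh_eq_sinh_div_cosh]
  refine ((hasDerivAt_sinh w).div (hasDerivAt_cosh w) hw).congr_deriv ?_
  simp only [Pi.div_apply]
  field_simp

lemma Complex.analyticAt_tanh {w : ℂ} (hw : cosh w ≠ 0) : AnalyticAt ℂ tanh w := by
  rw [show tanh = sinh / cosh from funext tanh_eq_sinh_div_cosh]
  exact analyticAt_sinh.div analyticAt_cosh hw

lemma tCoeff_tanh_comp {ω : ℂ → ℂ} (hω : AnalyticAt ℂ ω 0) (hω0 : ω 0 = 0) :
    tCoeff (fun z => tanh (ω z)) 1 = tCoeff ω 1 ∧ tCoeff (fun z => tanh (ω z)) 2 = tCoeff ω 2 ∧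
    tCoeff (fun z => tanh (ω z)) 3 = tCoeff ω 3 - tCoeff ω 1 ^ 3 / 3 := by
  set s : ℂ → ℂ := fun z => tanh (ω z)
  have hcosh : ∀ᶠ z in 𝓝 0, cosh (ω z) ≠ 0 :=
    (analyticAt_cosh.continuousAt.comp hω.continuousAt).eventually_ne (by simp [hω0])
  have hs : AnalyticAt ℂ s 0 := (analyticAt_tanh (by simp [hω0])).comp hω
  have hL : AnalyticAt ℂ (fun z => 1 - s z * s z) 0 := analyticAt_const.sub (hs.mul hs)
  have hs0 : s 0 = 0 := by simp [s, hω0]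
  have hODE : deriv s =ᶠ[𝓝 0] fun z => deriv ω z * (1 - s z * s z) := by
    filter_upwards [hcosh, hω.eventually_analyticAt] with z hz hωz
    exact ((hasDerivAt_tanh hz).comp z hωz.differentiableAt.hasDerivAt).deriv.trans (by ring)
  have hrec : ∀ n, (n + 1) * tCoeff s (n + 1) = ∑ i ∈ range (n + 1),
      (i + 1) * tCoeff ω (i + 1) * tCoeff (fun z => 1 - s z * s z) (n - i) := by
    intro n
    rw [← tCoeff_deriv, hODE.tCoeff_eq, tCoeff_mul hω.deriv hL]
    simp only [tCoeff_deriv]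
  have hL1 : tCoeff (fun z => 1 - s z * s z) 1 = 0 := by
    simp [tCoeff_const_sub, tCoeff_mul hs hs, sum_range_succ, hs0]
  have hL2 : tCoeff (fun z => 1 - s z * s z) 2 = -tCoeff s 1 ^ 2 := by
    simp [tCoeff_const_sub, tCoeff_mul hs hs, sum_range_succ, hs0, sq]
  have h0 := hrec 0
  have h1 := hrec 1
  have h2 := hrec 2
  simp [sum_range_succ, hs0, hL1, hL2] at h0 h1 h2
  rw [h0] at h2
  exact ⟨h0, h1, by linear_combination h2 / 3⟩

lemma psqrt_mul_self {w : ℂ} (hw : w ≠ 0) : psqrt w * psqrt w = w := by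
  rw [psqrt, ← exp_add, ← add_mul, add_halves, one_mul, exp_log hw]

lemma analyticAt_psqrt {w : ℂ} (hw : w ∈ slitPlane) : AnalyticAt ℂ psqrt w :=
  analyticAt_cexp.comp (analyticAt_const.mul (analyticAt_clog hw))

lemma tCoeff_psqrt_one_add {s : ℂ → ℂ} (hs : AnalyticAt ℂ s 0) (hs0 : s 0 = 0) :
    tCoeff (fun z => psqrt (1 + s z)) 1 = tCoeff s 1 / 2 ∧
    tCoeff (fun z => psqrt (1 + s z)) 2 = tCoeff s 2 / 2 - tCoeff s 1 ^ 2 / 8 ∧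
    tCoeff (fun z => psqrt (1 + s z)) 3 =
      tCoeff s 3 / 2 - tCoeff s 1 * tCoeff s 2 / 4 + tCoeff s 1 ^ 3 / 16 := by
  set g : ℂ → ℂ := fun z => psqrt (1 + s z)
  have hg : AnalyticAt ℂ g 0 :=
    (analyticAt_psqrt (by simp [hs0])).comp (analyticAt_const.add hs)
  have hg0 : g 0 = 1 := by simp [g, hs0, psqrt]
  have hsq : (fun z => g z * g z) =ᶠ[𝓝 0] fun z => 1 + s z := by
    filter_upwards [(continuousAt_const.add hs.continuousAt).eventually_ne
      (by simp [hs0] : 1 + s 0 ≠ 0)] with z hz using psqrt_mul_self hz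
  have hcoeff : ∀ n ≠ 0, ∑ i ∈ range (n + 1), tCoeff g i * tCoeff g (n - i) = tCoeff s n :=
    fun n hn => by rw [← tCoeff_mul hg hg, hsq.tCoeff_eq, tCoeff_const_add _ _ hn]
  have h1 := hcoeff 1 one_ne_zero
  have h2 := hcoeff 2 two_ne_zero
  have h3 := hcoeff 3 three_ne_zero
  simp [sum_range_succ, hg0] at h1 h2 h3
  have e1 : tCoeff g 1 = tCoeff s 1 / 2 := by linear_combination h1 / 2
  rw [e1] at h2 h3
  have e2 : tCoeff g 2 = tCoeff s 2 / 2 - tCoeff s 1 ^ 2 / 8 := by linear_combination h2 / 2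
  rw [e2] at h3
  exact ⟨e1, e2, by linear_combination h3 / 2⟩

lemma tCoeff_of_deriv_eq_psqrt_one_add_tanh {f ω : ℂ → ℂ} (hω : AnalyticAt ℂ ω 0) (hω0 : ω 0 = 0)
    (hf : deriv f =ᶠ[𝓝 0] fun z => psqrt (1 + tanh (ω z))) :
    tCoeff f 2 = tCoeff ω 1 / 4 ∧ tCoeff f 3 = tCoeff ω 2 / 6 - tCoeff ω 1 ^ 2 / 24 ∧
    tCoeff f 4 = tCoeff ω 3 / 8 - tCoeff ω 1 * tCoeff ω 2 / 16 - 5 * tCoeff ω 1 ^ 3 / 192 := by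
  obtain ⟨hs1, hs2, hs3⟩ := tCoeff_tanh_comp hω hω0
  obtain ⟨hg1, hg2, hg3⟩ :=
    tCoeff_psqrt_one_add (s := fun z => tanh (ω z)) ((analyticAt_tanh (by simp [hω0])).comp hω)
      (by simp [hω0])
  have ha : ∀ n, tCoeff f (n + 1) = tCoeff (fun z => psqrt (1 + tanh (ω z))) n / (n + 1) :=
    tCoeff_succ_of_deriv_eventuallyEq hf
  refine ⟨?_, ?_, ?_⟩
  · rw [ha 1, hg1, hs1]; ring
  · rw [ha 2, hg2, hs1, hs2]; ring
  · rw [ha 3, hg3, hs1, hs2, hs3]; ring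

/-- `48 (Γ₁ Γ₃ - Γ₂²)` for `f ∈ BT_B`, in terms of the coefficients of `ω(z) / z`. -/
noncomputable def hankelPoly (c₀ c₁ c₂ : ℂ) : ℂ :=
  3/8 * c₀ * c₂ - 7/48 * c₀ ^ 2 * c₁ - 1/3 * c₁ ^ 2 - 13/768 * c₀ ^ 4

lemma hankel_real_bound {x y z : ℝ} (hx0 : 0 ≤ x) (hx1 : x ≤ 1) (hy0 : 0 ≤ y)
    (hy : y ≤ 1 - x ^ 2) (hz : z ≤ 1 - x ^ 2 - y ^ 2 / (1 + x)) :
    3/8 * x * z + 7/48 * x ^ 2 * y + 1/3 * y ^ 2 + 13/768 * x ^ 4 ≤ 1/3 := by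
  have hx : 0 < 1 + x := by linarith
  have hz' : (1 + x) * z ≤ (1 - x ^ 2) * (1 + x) - y ^ 2 :=
    calc (1 + x) * z ≤ (1 + x) * (1 - x ^ 2 - y ^ 2 / (1 + x)) := by gcongr
      _ = (1 - x ^ 2) * (1 + x) - y ^ 2 := by field_simp
  nlinarith [mul_le_mul_of_nonneg_left hz' hx0, mul_nonneg hx0 hy0,
    mul_nonneg (sub_nonneg.2 hy) hy0, mul_nonneg (sub_nonneg.2 hy) hx0,
    mul_nonneg (mul_nonneg (sub_nonneg.2 hy) hx0) hy0,
    mul_nonneg (mul_nonneg (sub_nonneg.2 hx1) hx0) hy0, mul_nonneg (sub_nonneg.2 hx1) hx0]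

lemma norm_hankelPoly_le {c₀ c₁ c₂ : ℂ} (h₀ : ‖c₀‖ ≤ 1) (h₁ : ‖c₁‖ ≤ 1 - ‖c₀‖ ^ 2)
    (h₂ : ‖c₂‖ ≤ 1 - ‖c₀‖ ^ 2 - ‖c₁‖ ^ 2 / (1 + ‖c₀‖)) : ‖hankelPoly c₀ c₁ c₂‖ ≤ 1/3 := by
  calc ‖hankelPoly c₀ c₁ c₂‖
      ≤ ‖3/8 * c₀ * c₂‖ + ‖7/48 * c₀ ^ 2 * c₁‖ + ‖1/3 * c₁ ^ 2‖ + ‖13/768 * c₀ ^ 4‖ := by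
        simpa only [hankelPoly, sub_eq_add_neg, norm_neg] using
          norm_add₄_le (a := 3/8 * c₀ * c₂) (b := -(7/48 * c₀ ^ 2 * c₁)) (c := -(1/3 * c₁ ^ 2))
            (d := -(13/768 * c₀ ^ 4))
    _ = 3/8 * ‖c₀‖ * ‖c₂‖ + 7/48 * ‖c₀‖ ^ 2 * ‖c₁‖ + 1/3 * ‖c₁‖ ^ 2 + 13/768 * ‖c₀‖ ^ 4 := by
        simp only [norm_mul, norm_pow, norm_div, norm_ofNat, norm_one]
    _ ≤ 1/3 := hankel_real_bound (norm_nonneg _) h₀ (norm_nonneg _) h₁ h₂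

theorem BTB_hankel_log_inverse_bound (f : ℂ → ℂ) (hf : IsBTB f)
    (Γ₁ Γ₂ Γ₃ : ℂ)
    (hΓ₁ : Γ₁ = -(tCoeff f 2) / 2)
    (hΓ₂ : Γ₂ = -(1/2) * (tCoeff f 3 - (3/2) * (tCoeff f 2)^2))
    (hΓ₃ : Γ₃ = -(1/2) * (tCoeff f 4 - 4 * tCoeff f 2 * tCoeff f 3 + (10/3) * (tCoeff f 2)^3)) :
    ‖Γ₁ * Γ₃ - Γ₂^2‖ ≤ 1/144 := by
  obtain ⟨-, -, -, -, ω, hω, hω0, hωb, hfω⟩ := hf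
  have hdisc : ball (0 : ℂ) 1 ∈ 𝓝 0 := ball_mem_nhds 0 one_pos
  have hωa : AnalyticAt ℂ ω 0 := hω 0 (mem_of_mem_nhds hdisc)
  obtain ⟨ha₂, ha₃, ha₄⟩ := tCoeff_of_deriv_eq_psqrt_one_add_tanh hωa hω0
    (Filter.eventually_of_mem hdisc hfω)
  set D := dslope ω 0
  have hD : DifferentiableOn ℂ D (ball 0 1) :=
    (differentiableOn_dslope hdisc).mpr hω.differentiableOn
  have hDmaps : MapsTo D (ball 0 1) (closedBall 0 1) := fun z hz => by
    simpa using norm_dslope_le_div_of_mapsTo_ball hω.differentiableOn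
      (fun w hw => by simpa [hω0] using (hωb w hw).le) hz
  have hHankel : Γ₁ * Γ₃ - Γ₂ ^ 2 = hankelPoly (D 0) (tCoeff D 1) (tCoeff D 2) / 48 := by
    rw [← tCoeff_zero D]
    simp only [D, tCoeff_dslope hωa]
    rw [hΓ₁, hΓ₂, hΓ₃, ha₂, ha₃, ha₄, hankelPoly]
    ring
  have hbound := norm_hankelPoly_le (mem_closedBall_zero_iff.mp (hDmaps (mem_of_mem_nhds hdisc)))
    (norm_tCoeff_one_le hD hDmaps) (norm_tCoeff_two_le hD hDmaps)
  rw [hHankel, norm_div, norm_ofNat]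
  linarith
end

section
/- Let f be in the class BT_B with Taylor coefficients a_n, and let Γ_1 = −a_2/2, Γ_2 = −(1/2)(a_3 − (3/2)a_2²) be the first two logarithmic coefficients of the inverse function of f. Then |Γ_2| − |Γ_1| ≤ 1/12. -/
open Complex Metric

/-!
Squaring `f' = (1 + tanh ω)^(1/2)` gives `f'² = 1 + tanh ∘ ω` near `0`: the principal root
squares back wherever its argument is nonzero, and `1 + tanh ω` is close to `1` there. Comparing the first
two derivatives at `0`, with `tanh' 0 = 1` and `tanh'' 0 = 0` (`tanh` is odd), gives
`a₂ = ω'(0)/4` and `a₃ = ω''(0)/12 - ω'(0)²/24`, hence `Γ₁ = -ω'(0)/8` and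
`Γ₂ = -ω''(0)/24 + 13 ω'(0)²/192`. Cauchy's estimates on the unit disc give `|ω'(0)| ≤ 1` and
`|ω''(0)| ≤ 2`, and `1/12 + (13 x² - 24 x)/192 ≤ 1/12` for `0 ≤ x ≤ 1`.
-/

open Filter Topology

theorem Function.Odd.iteratedDeriv_zero_of_even {𝕜 F : Type*} [NontriviallyNormedField 𝕜]
    [CharZero 𝕜] [NormedAddCommGroup F] [NormedSpace 𝕜 F] {f : 𝕜 → F} (hf : f.Odd)
    {n : ℕ} (hn : Even n) : iteratedDeriv n f 0 = 0 := by
  have h : iteratedDeriv n f 0 = -iteratedDeriv n f 0 := by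
    conv_lhs => rw [show f = fun x ↦ -f (-x) by ext x; rw [hf x, neg_neg]]
    rw [iteratedDeriv_fun_neg, iteratedDeriv_comp_neg, hn.neg_one_pow, one_smul, neg_zero]
  have h2 : (2 : 𝕜) • iteratedDeriv n f 0 = 0 := by
    rw [two_smul]; exact eq_neg_iff_add_eq_zero.mp h
  exact (smul_eq_zero.mp h2).resolve_left two_ne_zero

theorem iteratedDeriv_two_fun_sq {𝕜 : Type*} [NontriviallyNormedField 𝕜] {F : 𝕜 → 𝕜} {x : 𝕜}
    (hF : ContDiffAt 𝕜 2 F x) :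
    iteratedDeriv 2 (fun z ↦ F z ^ 2) x = 2 * deriv F x ^ 2 + 2 * F x * iteratedDeriv 2 F x := by
  have hsq : ContDiffAt 𝕜 2 (fun w : 𝕜 ↦ w ^ 2) (F x) := contDiffAt_id.pow 2
  rw [show (fun z ↦ F z ^ 2) = (fun w : 𝕜 ↦ w ^ 2) ∘ F from rfl, iteratedDeriv_comp_two hsq hF]
  simp [iteratedDeriv_succ]

namespace Complex

theorem norm_iteratedDeriv_le_of_forall_mem_ball_norm_le {F : Type*} [NormedAddCommGroup F]
    [NormedSpace ℂ F] [CompleteSpace F] {c : ℂ} {R C : ℝ} {f : ℂ → F} (n : ℕ) (hR : 0 < R)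
    (hf : DifferentiableOn ℂ f (ball c R)) (hC : ∀ z ∈ ball c R, ‖f z‖ ≤ C) :
    ‖iteratedDeriv n f c‖ ≤ n.factorial * C / R ^ n := by
  have hlim : Tendsto (fun r : ℝ ↦ n.factorial * C / r ^ n) (𝓝[<] R)
      (𝓝 (n.factorial * C / R ^ n)) :=
    (continuousAt_const.div (continuousAt_id.pow n) (pow_ne_zero n hR.ne')).mono_left
      nhdsWithin_le_nhds
  refine ge_of_tendsto hlim ?_
  filter_upwards [Ioo_mem_nhdsLT hR] with r hr
  exact norm_iteratedDeriv_le_of_forall_mem_sphere_norm_le n hr.1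
    (hf.diffContOnCl_ball (closedBall_subset_ball hr.2))
    fun z hz ↦ hC z (sphere_subset_closedBall.trans (closedBall_subset_ball hr.2) hz)

theorem analyticAt_tanh_s11 {z : ℂ} (hz : cosh z ≠ 0) : AnalyticAt ℂ tanh z := by
  rw [show tanh = fun w ↦ sinh w / cosh w from funext tanh_eq_sinh_div_cosh]
  exact analyticAt_sinh.div analyticAt_cosh hz

theorem tanh_odd : Function.Odd tanh := fun _ ↦ tanh_neg _

theorem deriv_tanh_zero : deriv tanh 0 = 1 := by
  rw [show tanh = fun w ↦ sinh w / cosh w from funext tanh_eq_sinh_div_cosh,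
    ((hasDerivAt_sinh 0).fun_div (hasDerivAt_cosh 0) (by simp)).deriv]
  simp

theorem iteratedDeriv_two_tanh_zero : iteratedDeriv 2 tanh 0 = 0 :=
  tanh_odd.iteratedDeriv_zero_of_even even_two

theorem deriv_tanh_comp_of_eq_zero {ω : ℂ → ℂ} {x : ℂ} (hω : DifferentiableAt ℂ ω x)
    (hωx : ω x = 0) : deriv (fun z ↦ tanh (ω z)) x = deriv ω x := by
  have htanh : DifferentiableAt ℂ tanh (ω x) :=
    (analyticAt_tanh_s11 (by simp [hωx])).differentiableAt
  rw [show (fun z ↦ tanh (ω z)) = tanh ∘ ω from rfl, deriv_comp x htanh hω, hωx,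
    deriv_tanh_zero, one_mul]

theorem iteratedDeriv_two_tanh_comp_of_eq_zero {ω : ℂ → ℂ} {x : ℂ} (hω : ContDiffAt ℂ 2 ω x)
    (hωx : ω x = 0) : iteratedDeriv 2 (fun z ↦ tanh (ω z)) x = iteratedDeriv 2 ω x := by
  have htanh : ContDiffAt ℂ 2 tanh (ω x) := (analyticAt_tanh_s11 (by simp [hωx])).contDiffAt
  rw [show (fun z ↦ tanh (ω z)) = tanh ∘ ω from rfl, iteratedDeriv_comp_two htanh hω, hωx,
    iteratedDeriv_two_tanh_zero, deriv_tanh_zero]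
  ring

end Complex

theorem psqrt_sq {w : ℂ} (hw : w ≠ 0) : psqrt w ^ 2 = w := by
  rw [psqrt, ← Complex.exp_nat_mul, ← mul_assoc]
  norm_num [Complex.exp_log hw]

theorem eventuallyEq_psqrt_sq {g : ℂ → ℂ} {x : ℂ} (hg : ContinuousAt g x) (hgx : g x ≠ 0) :
    (fun z ↦ psqrt (g z) ^ 2) =ᶠ[𝓝 x] g := by
  filter_upwards [hg.eventually_ne hgx] with z hz using psqrt_sq hz

theorem deriv_relations_of_sq_eventuallyEq_one_add_tanh {F ω : ℂ → ℂ} (hF : AnalyticAt ℂ F 0)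
    (hω : AnalyticAt ℂ ω 0) (hF0 : F 0 = 1) (hω0 : ω 0 = 0)
    (hsq : (fun z ↦ F z ^ 2) =ᶠ[𝓝 0] fun z ↦ 1 + tanh (ω z)) :
    2 * deriv F 0 = deriv ω 0 ∧
      2 * deriv F 0 ^ 2 + 2 * iteratedDeriv 2 F 0 = iteratedDeriv 2 ω 0 := by
  constructor
  · have := hsq.deriv_eq
    rwa [deriv_fun_pow hF.differentiableAt, deriv_const_add,
      deriv_tanh_comp_of_eq_zero hω.differentiableAt hω0, hF0, one_pow, mul_one] at this
  · have := hsq.iteratedDeriv_eq 2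
    rwa [iteratedDeriv_two_fun_sq hF.contDiffAt, hF0, iteratedDeriv_const_add two_pos,
      iteratedDeriv_two_tanh_comp_of_eq_zero hω.contDiffAt hω0, mul_one] at this

theorem tCoeff_succ (f : ℂ → ℂ) (n : ℕ) :
    tCoeff f (n + 1) = iteratedDeriv n (deriv f) 0 / (n + 1).factorial := by
  rw [tCoeff, iteratedDeriv_succ']

theorem norm_sub_norm_le_of_schwarz_bounds {c d : ℂ} (hc : ‖c‖ ≤ 1) (hd : ‖d‖ ≤ 2) :
    ‖-(1/2) * ((d / 12 - c ^ 2 / 24) - (3/2) * (c / 4) ^ 2)‖ - ‖-(c / 4) / 2‖ ≤ 1/12 := by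
  have hΓ₂ : ‖-(1/2) * ((d / 12 - c ^ 2 / 24) - (3/2) * (c / 4) ^ 2)‖
      ≤ ‖d‖ / 24 + 13 / 192 * ‖c‖ ^ 2 :=
    calc _ = ‖-d / 24 + 13 / 192 * c ^ 2‖ := by ring_nf
      _ ≤ _ := (norm_add_le _ _).trans_eq (by simp [norm_pow])
  have hΓ₁ : ‖-(c / 4) / 2‖ = ‖c‖ / 8 := by
    rw [neg_div, norm_neg, div_div, norm_div]; norm_num
  nlinarith [norm_nonneg c]

theorem BTB_Gamma_diff_upper (f : ℂ → ℂ) (hf : IsBTB f) :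
    ‖-(1/2) * (tCoeff f 3 - (3/2) * (tCoeff f 2)^2)‖
      - ‖-(tCoeff f 2) / 2‖ ≤ 1/12 := by
  obtain ⟨hfa, -, hf'0, -, ω, hωa, hω0, hωb, hf'⟩ := hf
  have hF : AnalyticAt ℂ (deriv f) 0 := hfa.deriv 0 (mem_ball_self one_pos)
  have hω : AnalyticAt ℂ ω 0 := hωa 0 (mem_ball_self one_pos)
  have hg : AnalyticAt ℂ (fun z ↦ 1 + tanh (ω z)) 0 :=
    analyticAt_const.add ((analyticAt_tanh_s11 (by simp [hω0])).comp hω)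
  have hsq : (fun z ↦ deriv f z ^ 2) =ᶠ[𝓝 0] fun z ↦ 1 + tanh (ω z) :=
    ((eventuallyEq_of_mem (ball_mem_nhds 0 one_pos) hf').fun_comp (· ^ 2)).trans
      (eventuallyEq_psqrt_sq hg.continuousAt (by simp [hω0]))
  obtain ⟨h₁, h₂⟩ := deriv_relations_of_sq_eventuallyEq_one_add_tanh hF hω hf'0 hω0 hsq
  have hbound (n : ℕ) : ‖iteratedDeriv n ω 0‖ ≤ n.factorial := by
    simpa using norm_iteratedDeriv_le_of_forall_mem_ball_norm_le n one_pos
      hωa.differentiableOn fun z hz ↦ (hωb z hz).le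
  have ha₂ : tCoeff f 2 = deriv ω 0 / 4 := by
    rw [tCoeff_succ, iteratedDeriv_one, ← h₁, Nat.factorial_two]; push_cast; ring
  have ha₃ : tCoeff f 3 = iteratedDeriv 2 ω 0 / 12 - deriv ω 0 ^ 2 / 24 := by
    rw [tCoeff_succ, ← h₁, ← h₂, Nat.factorial_succ, Nat.factorial_two]; push_cast; ring
  rw [ha₂, ha₃]
  exact norm_sub_norm_le_of_schwarz_bounds (by simpa using hbound 1) (by simpa using hbound 2)
end
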